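/- Let (K,R) be a quasitriangular Hopf *-algebra with antireal R-matrix (R^{*⊗*} = R^{-1}), and L a K-module *-algebra. Then L⊗L with the braided product (x⊗y)·(x'⊗y') = x(R_α▷x') ⊗ (Rᵅ▷y)y' and involution (x⊗y)* := (R_α▷x*) ⊗ (Rᵅ▷y*) is a K-module *-algebra: the involution is antimultiplicative and satisfies (k▷(x⊗y))* = S^{-1}(k*)▷(x⊗y)*. -/

import Mathlib

/-! STATEMENT 11: the braided tensor product of a module *-algebra over a quasitriangular Hopf *-algebra with antireal R-matrix is a module *-algebra. -/

noncomputable section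
open TensorProduct

variable (𝕜 : Type*) [CommRing 𝕜]
variable (K : Type*) [Ring K] [HopfAlgebra 𝕜 K]
/-- `Δ ⊗ id` as an algebra map `K ⊗ K → K ⊗ (K ⊗ K)`. -/
def comul12 : K ⊗[𝕜] K →ₐ[𝕜] K ⊗[𝕜] (K ⊗[𝕜] K) :=
  (Algebra.TensorProduct.assoc 𝕜 𝕜 𝕜 K K K).toAlgHom.comp
    (Algebra.TensorProduct.map (Bialgebra.comulAlgHom 𝕜 K) (AlgHom.id 𝕜 K))

/-- `id ⊗ Δ`. -/
def comul23 : K ⊗[𝕜] K →ₐ[𝕜] K ⊗[𝕜] (K ⊗[𝕜] K) :=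
  Algebra.TensorProduct.map (AlgHom.id 𝕜 K) (Bialgebra.comulAlgHom 𝕜 K)

/-- `x ⊗ y ↦ x ⊗ y ⊗ 1`. -/
def ins12 : K ⊗[𝕜] K →ₐ[𝕜] K ⊗[𝕜] (K ⊗[𝕜] K) :=
  Algebra.TensorProduct.map (AlgHom.id 𝕜 K) Algebra.TensorProduct.includeLeft

/-- `x ⊗ y ↦ 1 ⊗ x ⊗ y`. -/
def ins23 : K ⊗[𝕜] K →ₐ[𝕜] K ⊗[𝕜] (K ⊗[𝕜] K) :=
  Algebra.TensorProduct.includeRight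

/-- `x ⊗ y ↦ x ⊗ 1 ⊗ y`. -/
def ins13 : K ⊗[𝕜] K →ₐ[𝕜] K ⊗[𝕜] (K ⊗[𝕜] K) :=
  Algebra.TensorProduct.map (AlgHom.id 𝕜 K) Algebra.TensorProduct.includeRight

/-- Quasitriangular structure: `R` invertible with inverse `Ri`,
quasi-cocommutativity `τ(Δ k) R = R Δ k`, and the two hexagon relations. -/
structure QuasiTri (R Ri : K ⊗[𝕜] K) : Prop where
  mul_inv : R * Ri = 1
  inv_mul : Ri * R = 1
  quasi : ∀ k : K, (TensorProduct.comm 𝕜 K K) (Coalgebra.comul k) * R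
      = R * (Coalgebra.comul k : K ⊗[𝕜] K)
  hex1 : comul12 𝕜 K R = ins13 𝕜 K R * ins23 𝕜 K R
  hex2 : comul23 𝕜 K R = ins13 𝕜 K R * ins12 𝕜 K R
/-- Given an action `β` of `K` and a bilinear operation `μ` on `M`, the map
sending `t = Σ k₁ ⊗ k₂` and `a, b` to `Σ μ (k₁ ▷ a) (k₂ ▷ b)` (Sweedler-style
combination). -/
def sweedlerOp {M : Type*} [AddCommGroup M] [Module 𝕜 M]
    (β : K →ₗ[𝕜] M →ₗ[𝕜] M) (μ : M →ₗ[𝕜] M →ₗ[𝕜] M) :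
    K ⊗[𝕜] K →ₗ[𝕜] M →ₗ[𝕜] M →ₗ[𝕜] M :=
  TensorProduct.lift <| LinearMap.mk₂ 𝕜
    (fun k1 k2 => (μ.comp (β k1)).compl₂ (β k2))
    (fun k k' l => by ext a b; simp [LinearMap.compl₂_apply, map_add])
    (fun c k l => by ext a b; simp [LinearMap.compl₂_apply, map_smul])
    (fun k l l' => by ext a b; simp [LinearMap.compl₂_apply, map_add])
    (fun c k l => by ext a b; simp [LinearMap.compl₂_apply, map_smul])

/-- A module-algebra action of the bialgebra `K` on the algebra `A`:
`act` is a representation of `K`, `k ▷ (ab) = (k₍₁₎ ▷ a)(k₍₂₎ ▷ b)` and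
`k ▷ 1 = ε(k) 1`. -/
structure MAlgAction {A : Type*} [Ring A] [Algebra 𝕜 A]
    (act : K →ₗ[𝕜] A →ₗ[𝕜] A) : Prop where
  act_act : ∀ k l : K, act (k * l) = (act k).comp (act l)
  act_one : act 1 = LinearMap.id
  act_mul : ∀ (k : K) (a b : A),
    act k (a * b) = sweedlerOp 𝕜 K act (LinearMap.mul 𝕜 A) (Coalgebra.comul k) a b
  act_unit : ∀ k : K, act k 1 = Coalgebra.counit (R := 𝕜) k • (1 : A)
variable {L : Type*} [Ring L] [Algebra 𝕜 L]

/-- The action of `K ⊗ K` on `L ⊗ L` acting componentwise. -/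
def actPair (act : K →ₗ[𝕜] L →ₗ[𝕜] L) :
    K ⊗[𝕜] K →ₗ[𝕜] (L ⊗[𝕜] L →ₗ[𝕜] L ⊗[𝕜] L) :=
  (TensorProduct.homTensorHomMap (RingHom.id 𝕜) L L L L).comp (TensorProduct.map act act)

/-- The braiding `Ψ_R : y ⊗ x ↦ (R_α ▷ x) ⊗ (Rᵅ ▷ y)`. -/
def braiding (act : K →ₗ[𝕜] L →ₗ[𝕜] L) (R : K ⊗[𝕜] K) :
    L ⊗[𝕜] L →ₗ[𝕜] L ⊗[𝕜] L :=
  (actPair 𝕜 K act ((TensorProduct.comm 𝕜 K K) R)).comp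
    (TensorProduct.comm 𝕜 L L).toLinearMap

/-- The braided product on `(L ⊗ L) ⊗ (L ⊗ L)`:
`(x ⊗ y)(x' ⊗ y') = x (R_α ▷ x') ⊗ (Rᵅ ▷ y) y'`. -/
def botMulAux (act : K →ₗ[𝕜] L →ₗ[𝕜] L) (R : K ⊗[𝕜] K) :
    (L ⊗[𝕜] L) ⊗[𝕜] (L ⊗[𝕜] L) →ₗ[𝕜] L ⊗[𝕜] L :=
  (TensorProduct.map (LinearMap.mul' 𝕜 L) (LinearMap.mul' 𝕜 L)).comp <|
  (TensorProduct.assoc 𝕜 (L ⊗[𝕜] L) L L).toLinearMap.comp <|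
  (TensorProduct.map (TensorProduct.assoc 𝕜 L L L).symm.toLinearMap
      (LinearMap.id : L →ₗ[𝕜] L)).comp <|
  (TensorProduct.map
      (TensorProduct.map (LinearMap.id : L →ₗ[𝕜] L) (braiding 𝕜 K act R))
      (LinearMap.id : L →ₗ[𝕜] L)).comp <|
  (TensorProduct.map (TensorProduct.assoc 𝕜 L L L).toLinearMap
      (LinearMap.id : L →ₗ[𝕜] L)).comp
  (TensorProduct.assoc 𝕜 (L ⊗[𝕜] L) L L).symm.toLinearMap

/-- The braided product on `L ⊗ L` as a bilinear map. -/
def botMul (act : K →ₗ[𝕜] L →ₗ[𝕜] L) (R : K ⊗[𝕜] K) :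
    L ⊗[𝕜] L →ₗ[𝕜] L ⊗[𝕜] L →ₗ[𝕜] L ⊗[𝕜] L :=
  TensorProduct.curry (botMulAux 𝕜 K act R)

/-- The diagonal action of `K` on `L ⊗ L`, `k ▷ (x ⊗ y) = (k₍₁₎ ▷ x) ⊗ (k₍₂₎ ▷ y)`. -/
def diagAct (act : K →ₗ[𝕜] L →ₗ[𝕜] L) :
    K →ₗ[𝕜] (L ⊗[𝕜] L →ₗ[𝕜] L ⊗[𝕜] L) :=
  (actPair 𝕜 K act).comp (Coalgebra.comul : K →ₗ[𝕜] K ⊗[𝕜] K)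
section StarStructures

variable (H : Type*) [Ring H] [HopfAlgebra ℂ H] [StarRing H] [StarModule ℂ H]

/-- `starT` is the conjugate-linear extension of `x ⊗ y ↦ x* ⊗ y*` to
`H ⊗ H`. -/
structure IsStarT (starT : H ⊗[ℂ] H → H ⊗[ℂ] H) : Prop where
  map_add : ∀ s t : H ⊗[ℂ] H, starT (s + t) = starT s + starT t
  map_smul : ∀ (c : ℂ) (t : H ⊗[ℂ] H),
    starT (c • t) = (starRingEnd ℂ c) • starT t
  map_tmul : ∀ x y : H, starT (x ⊗ₜ[ℂ] y) = star x ⊗ₜ[ℂ] star y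

end StarStructures

/-! Write `T = τ R` for the flipped R-matrix (so that `T ▷ (x ⊗ y) = R_α ▷ x ⊗ Rᵅ ▷ y`) and
`J = S⁻¹ ⊗ S⁻¹`. The involution of `L ⊗ L` is `t ↦ T ▷ t*`, where `*` acts factorwise, and the
*-compatibility of the action gives `(W ▷ t)* = J(W*) ▷ t*` for `W ∈ K ⊗ K`. From the hexagon
relations one gets `(S ⊗ id) R = R⁻¹ = (id ⊗ S⁻¹) R`, hence `J(R⁻¹) = R⁻¹`, and with `R* = R⁻¹`
this is `J(T*) = T⁻¹`: applying the involution twice acts by `T T⁻¹ = 1`. Compatibility with the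
action reduces, via `Δ ∘ S = τ ∘ (S ⊗ S) ∘ Δ`, to quasi-cocommutativity `T · τΔ(h) = Δ(h) · T`.
For antimultiplicativity, both sides are the action of an element of `K^{⊗4}` on
`x'* ⊗ x* ⊗ y'* ⊗ y*` followed by multiplication inside each factor: `(Δ ⊗ Δ)(T) · T₁₄⁻¹` on one
side and `T₂₃ T₁₃ T₂₄` on the other, and these agree because the hexagons give
`(Δ ⊗ Δ)(T) = T₂₃ T₂₄ T₁₃ T₁₄`. -/

variable {𝕜 K}

open Coalgebra HopfAlgebra WithConv LinearMap

section Hopf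

variable {R H : Type*} [CommSemiring R] [Semiring H]

theorem mul'_map_counit_comm_comul [Bialgebra R H] :
    mul' R H ∘ₗ map (Algebra.linearMap R H ∘ₗ counit) .id ∘ₗ
      (TensorProduct.comm R H H).toLinearMap ∘ₗ comul = .id := by
  have h : mul' R H ∘ₗ map (Algebra.linearMap R H ∘ₗ counit) .id ∘ₗ
      (TensorProduct.comm R H H).toLinearMap =
      mul' R H ∘ₗ map .id (Algebra.linearMap R H ∘ₗ counit) := by
    ext a b
    simp [Algebra.commutes]
  rw [← comp_assoc, ← comp_assoc, comp_assoc (h := mul' R H), h]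
  exact congrArg ofConv (mul_one (toConv (LinearMap.id : H →ₗ[R] H)))

namespace HopfAlgebra

variable [HopfAlgebra R H]

local notation "δ" => (comul : H →ₗ[R] H ⊗[R] H)
local notation "𝑺" => (antipode R : H →ₗ[R] H)

theorem convMul_comul_eq_one :
    toConv ((TensorProduct.comm R H H).toLinearMap ∘ₗ map 𝑺 𝑺 ∘ₗ δ) * toConv δ = 1 := by
  set G := (TensorProduct.comm R H H).toLinearMap ∘ₗ map 𝑺 𝑺
  -- `M (a ⊗ (m ⊗ d)) = m ⊗ S(a) d` contracts the two middle legs of `(Δ ⊗ Δ) Δ`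
  obtain ⟨M, hM, hMε⟩ : ∃ M : H ⊗[R] (H ⊗[R] H) →ₗ[R] H ⊗[R] H,
      mul' R (H ⊗[R] H) ∘ₗ map G .id ∘ₗ (TensorProduct.assoc R H H (H ⊗[R] H)).symm.toLinearMap ∘ₗ
        lTensor H (TensorProduct.assoc R H H H).toLinearMap =
        M ∘ₗ lTensor H (rTensor H (mul' R H ∘ₗ rTensor H 𝑺)) ∧
      M ∘ₗ lTensor H (rTensor H (Algebra.linearMap R H) ∘ₗ rTensor H counit ∘ₗ δ) =
        Algebra.TensorProduct.includeRight.toLinearMap ∘ₗ mul' R H ∘ₗ rTensor H 𝑺 := by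
    refine ⟨lTensor H (mul' R H ∘ₗ rTensor H 𝑺) ∘ₗ (TensorProduct.leftComm R H H H).toLinearMap,
      ?_, ?_⟩
    · ext a b c d
      simp [G, Algebra.TensorProduct.tmul_mul_tmul]
    · rw [rTensor_counit_comp_comul]
      ext a b
      simp
  have hS : (mul' R H ∘ₗ rTensor H 𝑺) ∘ₗ δ = Algebra.linearMap R H ∘ₗ counit :=
    mul_antipode_rTensor_comul
  apply WithConv.ext
  calc mul' R (H ⊗[R] H) ∘ₗ map (G ∘ₗ δ) δ ∘ₗ δ
      = mul' R (H ⊗[R] H) ∘ₗ map G .id ∘ₗ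
          (TensorProduct.assoc R H H (H ⊗[R] H)).symm.toLinearMap ∘ₗ
          lTensor H (TensorProduct.assoc R H H H).toLinearMap ∘ₗ
          lTensor H (rTensor H δ) ∘ₗ lTensor H δ ∘ₗ δ := by
        simp only [coassoc_simps]
    _ = M ∘ₗ lTensor H (rTensor H ((mul' R H ∘ₗ rTensor H 𝑺) ∘ₗ δ)) ∘ₗ lTensor H δ ∘ₗ δ := by
        rw [rTensor_comp, lTensor_comp, comp_assoc, ← comp_assoc (h := M), ← hM]
        simp only [comp_assoc]
    _ = (M ∘ₗ lTensor H (rTensor H (Algebra.linearMap R H) ∘ₗ rTensor H counit ∘ₗ δ)) ∘ₗ δ := by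
        simp only [hS, rTensor_comp, lTensor_comp, comp_assoc]
    _ = Algebra.linearMap R (H ⊗[R] H) ∘ₗ counit := by
        rw [hMε, comp_assoc, comp_assoc, mul_antipode_rTensor_comul]
        ext c
        simp [Algebra.algebraMap_eq_smul_one, Algebra.TensorProduct.one_def]

/-- Both sides are convolution inverses of `Δ` in `Hom(H, H ⊗ H)`. -/
theorem comul_comp_antipode :
    δ ∘ₗ 𝑺 = (TensorProduct.comm R H H).toLinearMap ∘ₗ map 𝑺 𝑺 ∘ₗ δ :=
  congrArg ofConv (left_inv_eq_right_inv convMul_comul_eq_one LinearMap.comul_right_inv) |>.symm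

variable {Sinv : H →ₗ[R] H}

theorem mul'_map_comm_comul_of_antipode_inverse (hS₁ : ∀ k, antipode R (Sinv k) = k)
    (hS₂ : ∀ k, Sinv (antipode R k) = k) :
    mul' R H ∘ₗ map Sinv .id ∘ₗ (TensorProduct.comm R H H).toLinearMap ∘ₗ comul =
      Algebra.linearMap R H ∘ₗ counit := by
  have hS : 𝑺 ∘ₗ mul' R H ∘ₗ map Sinv .id ∘ₗ (TensorProduct.comm R H H).toLinearMap =
      mul' R H ∘ₗ rTensor H 𝑺 := by
    ext a b
    simp [antipode_mul_antidistrib, hS₁]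
  ext k
  apply Function.LeftInverse.injective hS₂
  simpa [Algebra.algebraMap_eq_smul_one] using congr($hS (comul k))

theorem map_comul_of_antipode_inverse (hS₁ : ∀ k, antipode R (Sinv k) = k)
    (hS₂ : ∀ k, Sinv (antipode R k) = k) (k : H) :
    map Sinv Sinv (comul k) = TensorProduct.comm R H H (comul (Sinv k)) := by
  have hSS : ∀ W, map Sinv Sinv (map 𝑺 𝑺 W) = W := fun W => by
    rw [← LinearMap.comp_apply, ← map_comp, show Sinv ∘ₗ 𝑺 = .id from ext hS₂, map_id, id_apply]
  conv_lhs => rw [← hS₁ k, ← LinearMap.comp_apply comul, comul_comp_antipode]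
  simp only [LinearMap.comp_apply, LinearEquiv.coe_coe, TensorProduct.map_comm, hSS]

end HopfAlgebra

end Hopf

section Legs

variable {R A : Type*} [CommSemiring R] [Semiring A] [Algebra R A]
open Algebra.TensorProduct (includeLeft includeRight)

/-! The legs of `(A ⊗ A) ⊗ (A ⊗ A)` are numbered `1 2 | 3 4`; `legij` places the two tensor
factors of `A ⊗ A` in legs `i` and `j`. -/

def leg13 : A ⊗[R] A →ₐ[R] (A ⊗[R] A) ⊗[R] (A ⊗[R] A) :=
  Algebra.TensorProduct.map includeLeft includeLeft

def leg14 : A ⊗[R] A →ₐ[R] (A ⊗[R] A) ⊗[R] (A ⊗[R] A) :=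
  Algebra.TensorProduct.map includeLeft includeRight

def leg23 : A ⊗[R] A →ₐ[R] (A ⊗[R] A) ⊗[R] (A ⊗[R] A) :=
  Algebra.TensorProduct.map includeRight includeLeft

def leg24 : A ⊗[R] A →ₐ[R] (A ⊗[R] A) ⊗[R] (A ⊗[R] A) :=
  Algebra.TensorProduct.map includeRight includeRight

@[simp] theorem leg13_tmul (a b : A) : leg13 (a ⊗ₜ[R] b) = (a ⊗ₜ 1) ⊗ₜ (b ⊗ₜ 1) := rfl
@[simp] theorem leg14_tmul (a b : A) : leg14 (a ⊗ₜ[R] b) = (a ⊗ₜ 1) ⊗ₜ (1 ⊗ₜ b) := rfl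
@[simp] theorem leg23_tmul (a b : A) : leg23 (a ⊗ₜ[R] b) = (1 ⊗ₜ a) ⊗ₜ (b ⊗ₜ 1) := rfl
@[simp] theorem leg24_tmul (a b : A) : leg24 (a ⊗ₜ[R] b) = (1 ⊗ₜ a) ⊗ₜ (1 ⊗ₜ b) := rfl

theorem leg24_mul_leg13 (u v : A ⊗[R] A) : leg24 u * leg13 v = leg13 v * leg24 u := by
  induction u using TensorProduct.induction_on with
  | zero => simp
  | add u u' hu hu' => simp only [map_add, add_mul, mul_add, hu, hu']
  | tmul a b =>
    induction v using TensorProduct.induction_on with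
    | zero => simp
    | add v v' hv hv' => simp only [map_add, add_mul, mul_add, hv, hv']
    | tmul c d => simp

theorem tensorTensorTensorComm_tmul_eq_leg13_mul_leg24 (u v : A ⊗[R] A) :
    tensorTensorTensorComm R A A A A (u ⊗ₜ v) = leg13 u * leg24 v := by
  induction u using TensorProduct.induction_on with
  | zero => simp
  | add u u' hu hu' => simp only [add_tmul, map_add, add_mul, hu, hu']
  | tmul a b =>
    induction v using TensorProduct.induction_on with
    | zero => simp
    | add v v' hv hv' => simp only [tmul_add, map_add, mul_add, hv, hv']
    | tmul c d => simp

end Legs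

theorem comul12_apply (W : K ⊗[𝕜] K) :
    comul12 𝕜 K W = TensorProduct.assoc 𝕜 K K K (rTensor K comul W) := by
  induction W using TensorProduct.induction_on with
  | zero => simp
  | tmul a b => rfl
  | add u v hu hv => simp only [map_add, hu, hv]

theorem comul23_apply (W : K ⊗[𝕜] K) : comul23 𝕜 K W = lTensor K comul W := by
  induction W using TensorProduct.induction_on with
  | zero => simp
  | tmul a b => rfl
  | add u v hu hv => simp only [map_add, hu, hv]

namespace QuasiTri

variable {R Ri : K ⊗[𝕜] K}

theorem isUnit (hQT : QuasiTri 𝕜 K R Ri) : IsUnit R := ⟨⟨R, Ri, hQT.mul_inv, hQT.inv_mul⟩, rfl⟩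

theorem rTensor_mul_rTensor (hQT : QuasiTri 𝕜 K R Ri) (f g : WithConv (K →ₗ[𝕜] K)) :
    rTensor K f.ofConv R * rTensor K g.ofConv R = rTensor K (f * g).ofConv R := by
  have contract : ∀ u v : K ⊗[𝕜] K, rTensor K (mul' 𝕜 K ∘ₗ map f.ofConv g.ofConv)
      ((TensorProduct.assoc 𝕜 K K K).symm (ins13 𝕜 K u * ins23 𝕜 K v)) =
        rTensor K f.ofConv u * rTensor K g.ofConv v := by
    intro u v
    induction u using TensorProduct.induction_on with
    | zero => simp
    | add u u' hu hu' => simp only [map_add, add_mul, hu, hu']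
    | tmul a b =>
      induction v using TensorProduct.induction_on with
      | zero => simp
      | add v v' hv hv' => simp only [map_add, mul_add, hv, hv']
      | tmul c d => simp [ins13, ins23]
  rw [← contract, ← hQT.hex1, comul12_apply, LinearEquiv.symm_apply_apply, ← rTensor_comp_apply,
    comp_assoc]
  rfl

theorem lTensor_mul_lTensor (hQT : QuasiTri 𝕜 K R Ri) (f g : K →ₗ[𝕜] K) :
    lTensor K f R * lTensor K g R =
      lTensor K (mul' 𝕜 K ∘ₗ map f g ∘ₗ (TensorProduct.comm 𝕜 K K).toLinearMap ∘ₗ comul) R := by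
  have contract : ∀ u v : K ⊗[𝕜] K,
      lTensor K (mul' 𝕜 K ∘ₗ map f g ∘ₗ (TensorProduct.comm 𝕜 K K).toLinearMap)
        (ins13 𝕜 K u * ins12 𝕜 K v) = lTensor K f u * lTensor K g v := by
    intro u v
    induction u using TensorProduct.induction_on with
    | zero => simp
    | add u u' hu hu' => simp only [map_add, add_mul, hu, hu']
    | tmul a b =>
      induction v using TensorProduct.induction_on with
      | zero => simp
      | add v v' hv hv' => simp only [map_add, mul_add, hv, hv']
      | tmul c d => simp [ins13, ins12]
  rw [← contract, ← hQT.hex2, comul23_apply, ← lTensor_comp_apply]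
  rfl

theorem rTensor_antipode (hQT : QuasiTri 𝕜 K R Ri) : rTensor K (antipode 𝕜) R = Ri := by
  have hε : rTensor K (1 : WithConv (K →ₗ[𝕜] K)).ofConv R = 1 := by
    rw [← hQT.isUnit.mul_eq_right]
    simpa using hQT.rTensor_mul_rTensor 1 (toConv .id)
  refine left_inv_eq_right_inv ?_ hQT.mul_inv
  simpa [hε] using hQT.rTensor_mul_rTensor (toConv (antipode 𝕜)) (toConv .id)

variable {Sinv : K →ₗ[𝕜] K}

theorem lTensor_antipode_inverse (hQT : QuasiTri 𝕜 K R Ri)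
    (hS₁ : ∀ k, antipode 𝕜 (Sinv k) = k) (hS₂ : ∀ k, Sinv (antipode 𝕜 k) = k) :
    lTensor K Sinv R = Ri := by
  have hε : lTensor K (Algebra.linearMap 𝕜 K ∘ₗ counit) R = 1 := by
    rw [← hQT.isUnit.mul_eq_right]
    simpa [mul'_map_counit_comm_comul] using
      hQT.lTensor_mul_lTensor (Algebra.linearMap 𝕜 K ∘ₗ counit) .id
  refine left_inv_eq_right_inv ?_ hQT.mul_inv
  simpa [mul'_map_comm_comul_of_antipode_inverse hS₁ hS₂, hε] using
    hQT.lTensor_mul_lTensor Sinv .id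

theorem map_antipode_inverse_inv (hQT : QuasiTri 𝕜 K R Ri)
    (hS₁ : ∀ k, antipode 𝕜 (Sinv k) = k) (hS₂ : ∀ k, Sinv (antipode 𝕜 k) = k) :
    map Sinv Sinv Ri = Ri := by
  calc map Sinv Sinv Ri = map Sinv Sinv (rTensor K (antipode 𝕜) R) := by
        rw [hQT.rTensor_antipode]
    _ = lTensor K Sinv R := by
        rw [rTensor, ← LinearMap.comp_apply, ← map_comp, show Sinv ∘ₗ antipode 𝕜 = .id from ext hS₂,
          comp_id, lTensor]
    _ = Ri := hQT.lTensor_antipode_inverse hS₁ hS₂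

theorem comm_mul_comm_inv (hQT : QuasiTri 𝕜 K R Ri) :
    TensorProduct.comm 𝕜 K K R * TensorProduct.comm 𝕜 K K Ri = 1 := by
  have := congr(Algebra.TensorProduct.comm 𝕜 K K $(hQT.mul_inv))
  rwa [map_mul, map_one] at this

theorem comm_mul_comm_comul (hQT : QuasiTri 𝕜 K R Ri) (h : K) :
    TensorProduct.comm 𝕜 K K R * TensorProduct.comm 𝕜 K K (comul h) =
      comul h * TensorProduct.comm 𝕜 K K R := by
  have := congr(Algebra.TensorProduct.comm 𝕜 K K $(hQT.quasi h))
  rw [map_mul, map_mul, show Algebra.TensorProduct.comm 𝕜 K K (TensorProduct.comm 𝕜 K K (comul h)) =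
    comul h from TensorProduct.comm_comm 𝕜 K K _] at this
  exact this.symm

open Algebra.TensorProduct (ext')

local notation "ι₁" => (Algebra.TensorProduct.includeLeft : K →ₐ[𝕜] K ⊗[𝕜] K)
local notation "ι₂" => (Algebra.TensorProduct.includeRight : K →ₐ[𝕜] K ⊗[𝕜] K)
local notation "Δₐ" => Bialgebra.comulAlgHom 𝕜 K
local notation "τ" => (Algebra.TensorProduct.comm 𝕜 K K : K ⊗[𝕜] K →ₐ[𝕜] K ⊗[𝕜] K)

theorem map_comul_id_comm (hQT : QuasiTri 𝕜 K R Ri) :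
    Algebra.TensorProduct.map Δₐ (.id 𝕜 K) (τ R) =
      Algebra.TensorProduct.map ι₂ (.id 𝕜 K) (τ R) *
        Algebra.TensorProduct.map ι₁ (.id 𝕜 K) (τ R) := by
  let e := (Algebra.TensorProduct.comm 𝕜 K (K ⊗[𝕜] K)).toAlgHom
  have h₁ : e.comp (comul23 𝕜 K) = (Algebra.TensorProduct.map Δₐ (.id 𝕜 K)).comp τ :=
    ext' fun a b => by simp [e, comul23]
  have h₂ : e.comp (ins13 𝕜 K) = (Algebra.TensorProduct.map ι₂ (.id 𝕜 K)).comp τ :=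
    ext' fun a b => by simp [e, ins13]
  have h₃ : e.comp (ins12 𝕜 K) = (Algebra.TensorProduct.map ι₁ (.id 𝕜 K)).comp τ :=
    ext' fun a b => by simp [e, ins12]
  have := congr(e $(hQT.hex2))
  rwa [map_mul, ← AlgHom.comp_apply, ← AlgHom.comp_apply, ← AlgHom.comp_apply, h₁, h₂, h₃] at this

theorem comul23_comm (hQT : QuasiTri 𝕜 K R Ri) :
    comul23 𝕜 K (τ R) = ins12 𝕜 K (τ R) * ins13 𝕜 K (τ R) := by
  let e := (Algebra.TensorProduct.comm 𝕜 (K ⊗[𝕜] K) K).toAlgHom.comp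
    (Algebra.TensorProduct.assoc 𝕜 𝕜 𝕜 K K K).symm.toAlgHom
  have h₁ : e.comp (comul12 𝕜 K) = (comul23 𝕜 K).comp τ :=
    ext' fun a b => by simp [e, comul12, comul23]
  have h₂ : e.comp (ins13 𝕜 K) = (ins12 𝕜 K).comp τ := ext' fun a b => by simp [e, ins13, ins12]
  have h₃ : e.comp (ins23 𝕜 K) = (ins13 𝕜 K).comp τ := ext' fun a b => by simp [e, ins23, ins13]
  have := congr(e $(hQT.hex1))
  rwa [map_mul, ← AlgHom.comp_apply, ← AlgHom.comp_apply, ← AlgHom.comp_apply, h₁, h₂, h₃] at this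

theorem map_comul_comul_comm (hQT : QuasiTri 𝕜 K R Ri) :
    Algebra.TensorProduct.map Δₐ Δₐ (τ R) =
      leg23 (τ R) * leg24 (τ R) * (leg13 (τ R) * leg14 (τ R)) := by
  have hsplit : Algebra.TensorProduct.map Δₐ Δₐ =
      (Algebra.TensorProduct.map (.id 𝕜 (K ⊗[𝕜] K)) Δₐ).comp
        (Algebra.TensorProduct.map Δₐ (.id 𝕜 K)) := ext' fun a b => by simp
  have h₁ : (Algebra.TensorProduct.map (.id 𝕜 (K ⊗[𝕜] K)) Δₐ).comp
      (Algebra.TensorProduct.map ι₁ (.id 𝕜 K)) =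
      (Algebra.TensorProduct.map ι₁ (.id 𝕜 (K ⊗[𝕜] K))).comp (comul23 𝕜 K) :=
    ext' fun a b => by simp [comul23]
  have h₂ : (Algebra.TensorProduct.map (.id 𝕜 (K ⊗[𝕜] K)) Δₐ).comp
      (Algebra.TensorProduct.map ι₂ (.id 𝕜 K)) =
      (Algebra.TensorProduct.map ι₂ (.id 𝕜 (K ⊗[𝕜] K))).comp (comul23 𝕜 K) :=
    ext' fun a b => by simp [comul23]
  have h₁₃ : (Algebra.TensorProduct.map ι₁ (.id 𝕜 (K ⊗[𝕜] K))).comp (ins12 𝕜 K) = leg13 :=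
    ext' fun a b => by simp [ins12]
  have h₁₄ : (Algebra.TensorProduct.map ι₁ (.id 𝕜 (K ⊗[𝕜] K))).comp (ins13 𝕜 K) = leg14 :=
    ext' fun a b => by simp [ins13]
  have h₂₃ : (Algebra.TensorProduct.map ι₂ (.id 𝕜 (K ⊗[𝕜] K))).comp (ins12 𝕜 K) = leg23 :=
    ext' fun a b => by simp [ins12]
  have h₂₄ : (Algebra.TensorProduct.map ι₂ (.id 𝕜 (K ⊗[𝕜] K))).comp (ins13 𝕜 K) = leg24 :=
    ext' fun a b => by simp [ins13]
  simp only [AlgHom.ext_iff, AlgHom.comp_apply] at hsplit h₁ h₂ h₁₃ h₁₄ h₂₃ h₂₄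
  rw [hsplit, hQT.map_comul_id_comm, map_mul, h₁, h₂, hQT.comul23_comm, map_mul, map_mul, h₁₃, h₁₄,
    h₂₃, h₂₄]

theorem map_comul_comul_comm_mul_leg14 (hQT : QuasiTri 𝕜 K R Ri) :
    map comul comul (TensorProduct.comm 𝕜 K K R) * leg14 (TensorProduct.comm 𝕜 K K Ri) =
      leg23 (TensorProduct.comm 𝕜 K K R) *
        (leg13 (TensorProduct.comm 𝕜 K K R) * leg24 (TensorProduct.comm 𝕜 K K R)) := by
  change Algebra.TensorProduct.map Δₐ Δₐ (τ R) * leg14 (τ Ri) =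
    leg23 (τ R) * (leg13 (τ R) * leg24 (τ R))
  have hinv : leg14 (τ R) * leg14 (τ Ri) = 1 := by
    rw [← map_mul, ← map_mul, hQT.mul_inv, map_one, map_one]
  simp only [hQT.map_comul_comul_comm, mul_assoc, hinv, mul_one]
  rw [leg24_mul_leg13]

end QuasiTri

section Action

variable {act : K →ₗ[𝕜] L →ₗ[𝕜] L}

local notation "act₄" => actPair 𝕜 (K ⊗[𝕜] K) (actPair 𝕜 K act)

variable (act) in
theorem diagAct_apply (k : K) : diagAct 𝕜 K act k = actPair 𝕜 K act (comul k) := rfl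

variable (act) in
@[simp] theorem actPair_tmul (k l : K) : actPair 𝕜 K act (k ⊗ₜ l) = map (act k) (act l) := by
  simp [actPair]

theorem actPair_one (hone : act 1 = .id) : actPair 𝕜 K act 1 = .id := by
  rw [Algebra.TensorProduct.one_def, actPair_tmul, hone, map_id]

theorem actPair_mul (hmul : ∀ k l, act (k * l) = act k ∘ₗ act l) (W₁ W₂ : K ⊗[𝕜] K) :
    actPair 𝕜 K act (W₁ * W₂) = actPair 𝕜 K act W₁ ∘ₗ actPair 𝕜 K act W₂ := by
  induction W₁ using TensorProduct.induction_on with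
  | zero => simp
  | add u u' hu hu' => simp only [add_mul, map_add, hu, hu', add_comp]
  | tmul a b =>
    induction W₂ using TensorProduct.induction_on with
    | zero => simp
    | add v v' hv hv' => simp only [mul_add, map_add, hv, hv', comp_add]
    | tmul c d => simp [hmul, map_comp]

theorem actPair_mul_apply (hmul : ∀ k l, act (k * l) = act k ∘ₗ act l) (W₁ W₂ : K ⊗[𝕜] K)
    (t : L ⊗[𝕜] L) : actPair 𝕜 K act (W₁ * W₂) t = actPair 𝕜 K act W₁ (actPair 𝕜 K act W₂ t) :=
  congr($(actPair_mul hmul W₁ W₂) t)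

theorem sweedlerOp_mul_apply (s : K ⊗[𝕜] K) (a b : L) :
    sweedlerOp 𝕜 K act (LinearMap.mul 𝕜 L) s a b = mul' 𝕜 L (actPair 𝕜 K act s (a ⊗ₜ b)) := by
  induction s using TensorProduct.induction_on with
  | zero => simp [sweedlerOp]
  | tmul k l => simp [sweedlerOp]
  | add u v hu hv => simp only [map_add, LinearMap.add_apply, hu, hv]

theorem MAlgAction.act_comp_mul' (hact : MAlgAction 𝕜 K act) (k : K) :
    act k ∘ₗ mul' 𝕜 L = mul' 𝕜 L ∘ₗ actPair 𝕜 K act (comul k) := by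
  ext a b
  simp [hact.act_mul, sweedlerOp_mul_apply]

theorem MAlgAction.actPair_comp_map_mul' (hact : MAlgAction 𝕜 K act) (W : K ⊗[𝕜] K) :
    actPair 𝕜 K act W ∘ₗ map (mul' 𝕜 L) (mul' 𝕜 L) =
      map (mul' 𝕜 L) (mul' 𝕜 L) ∘ₗ act₄ (map comul comul W) := by
  induction W using TensorProduct.induction_on with
  | zero => simp
  | add u v hu hv => simp only [map_add, add_comp, comp_add, hu, hv]
  | tmul k l => simp [← map_comp, hact.act_comp_mul']

theorem tensorTensorTensorComm_actPair (X : (K ⊗[𝕜] K) ⊗[𝕜] (K ⊗[𝕜] K))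
    (ξ : (L ⊗[𝕜] L) ⊗[𝕜] (L ⊗[𝕜] L)) :
    tensorTensorTensorComm 𝕜 L L L L (act₄ X ξ) =
      act₄ (tensorTensorTensorComm 𝕜 K K K K X) (tensorTensorTensorComm 𝕜 L L L L ξ) := by
  suffices (tensorTensorTensorComm 𝕜 L L L L).toLinearMap ∘ₗ act₄ X =
      act₄ (tensorTensorTensorComm 𝕜 K K K K X) ∘ₗ
        (tensorTensorTensorComm 𝕜 L L L L).toLinearMap from congr($this ξ)
  induction X using TensorProduct.induction_on with
  | zero => simp
  | add X Y hX hY => simp only [map_add, comp_add, add_comp, hX, hY]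
  | tmul W W' =>
    induction W using TensorProduct.induction_on with
    | zero => simp
    | add u v hu hv => simp only [add_tmul, map_add, comp_add, add_comp, hu, hv]
    | tmul a b =>
      induction W' using TensorProduct.induction_on with
      | zero => simp
      | add u v hu hv => simp only [tmul_add, map_add, comp_add, add_comp, hu, hv]
      | tmul c d => simp [tensorTensorTensorComm_comp_map]

theorem botMul_apply (hone : act 1 = .id) (R : K ⊗[𝕜] K) (u v : L ⊗[𝕜] L) :
    botMul 𝕜 K act R u v = map (mul' 𝕜 L) (mul' 𝕜 L)
      (act₄ (leg23 (TensorProduct.comm 𝕜 K K R)) (tensorTensorTensorComm 𝕜 L L L L (u ⊗ₜ v))) := by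
  suffices botMulAux 𝕜 K act R = map (mul' 𝕜 L) (mul' 𝕜 L) ∘ₗ
      act₄ (leg23 (TensorProduct.comm 𝕜 K K R)) ∘ₗ
      (tensorTensorTensorComm 𝕜 L L L L).toLinearMap from congr($this (u ⊗ₜ v))
  refine TensorProduct.ext_fourfold' fun x y x' y' => ?_
  simp only [botMulAux, braiding, LinearMap.comp_apply, LinearEquiv.coe_coe,
    tensorTensorTensorComm_tmul]
  generalize TensorProduct.comm 𝕜 K K R = W
  induction W using TensorProduct.induction_on with
  | zero => simp
  | add u v hu hv =>
    simp only [map_add, add_comp, map_add_left, map_add_right, LinearMap.add_apply, hu, hv]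
  | tmul c d => simp [hone]

end Action

theorem TensorProduct.eq_of_map_add_of_map_tmul {R M N P : Type*} [CommSemiring R]
    [AddCommMonoid M] [AddCommMonoid N] [Module R M] [Module R N] [AddCommGroup P]
    {f g : M ⊗[R] N → P} (hf : ∀ s t, f (s + t) = f s + f t) (hg : ∀ s t, g (s + t) = g s + g t)
    (h : ∀ m n, f (m ⊗ₜ n) = g (m ⊗ₜ n)) : f = g := by
  have h0 : ∀ {φ : M ⊗[R] N → P}, (∀ s t, φ (s + t) = φ s + φ t) → φ 0 = 0 := fun hφ => by
    simpa using hφ 0 0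
  funext t
  induction t using TensorProduct.induction_on with
  | zero => rw [h0 hf, h0 hg]
  | tmul m n => exact h m n
  | add s t hs ht => rw [hf, hg, hs, ht]

theorem TensorProduct.star_comm_apply {R M N : Type*} [CommSemiring R] [StarRing R]
    [AddCommMonoid M] [StarAddMonoid M] [Module R M] [StarModule R M]
    [AddCommMonoid N] [StarAddMonoid N] [Module R N] [StarModule R N] (x : M ⊗[R] N) :
    star (TensorProduct.comm R M N x) = TensorProduct.comm R M N (star x) := by
  induction x using TensorProduct.induction_on with
  | zero => simp
  | tmul a b => simp
  | add u v hu hv => simp only [map_add, star_add, hu, hv]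

section Star

variable [StarRing 𝕜] [StarRing K] [StarModule 𝕜 K] [StarRing L] [StarModule 𝕜 L]
variable {act : K →ₗ[𝕜] L →ₗ[𝕜] L} {Sinv : K →ₗ[𝕜] K} {R Ri : K ⊗[𝕜] K}

local notation "act₄" => actPair 𝕜 (K ⊗[𝕜] K) (actPair 𝕜 K act)

theorem star_actPair (hstar : ∀ k x, star (act k x) = act (Sinv (star k)) (star x))
    (W : K ⊗[𝕜] K) (t : L ⊗[𝕜] L) :
    star (actPair 𝕜 K act W t) = actPair 𝕜 K act (map Sinv Sinv (star W)) (star t) := by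
  induction W using TensorProduct.induction_on with
  | zero => simp
  | add u v hu hv => simp only [map_add, LinearMap.add_apply, star_add, hu, hv]
  | tmul a b =>
    induction t using TensorProduct.induction_on with
    | zero => simp
    | add s s' hs hs' => simp only [map_add, star_add, hs, hs']
    | tmul x y => simp [hstar]

theorem star_map_mul'_actPair_leg23 (hone : act 1 = .id)
    (hstar : ∀ k x, star (act k x) = act (Sinv (star k)) (star x)) (W : K ⊗[𝕜] K)
    (x y x' y' : L) :
    star (map (mul' 𝕜 L) (mul' 𝕜 L) (act₄ (leg23 W) ((x ⊗ₜ x') ⊗ₜ (y ⊗ₜ y')))) =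
      map (mul' 𝕜 L) (mul' 𝕜 L)
        (act₄ (leg14 (map Sinv Sinv (star W))) ((star x' ⊗ₜ star x) ⊗ₜ (star y' ⊗ₜ star y))) := by
  induction W using TensorProduct.induction_on with
  | zero => simp
  | add u v hu hv => simp only [map_add, LinearMap.add_apply, star_add, hu, hv]
  | tmul c d => simp [hone, hstar]

theorem QuasiTri.map_star_comm (hQT : QuasiTri 𝕜 K R Ri) (hanti : star R = Ri)
    (hS₁ : ∀ k, antipode 𝕜 (Sinv k) = k) (hS₂ : ∀ k, Sinv (antipode 𝕜 k) = k) :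
    map Sinv Sinv (star (TensorProduct.comm 𝕜 K K R)) = TensorProduct.comm 𝕜 K K Ri := by
  rw [TensorProduct.star_comm_apply, hanti, TensorProduct.map_comm,
    hQT.map_antipode_inverse_inv hS₁ hS₂]

variable (act R) in
def braidedStar (t : L ⊗[𝕜] L) : L ⊗[𝕜] L :=
  actPair 𝕜 K act (TensorProduct.comm 𝕜 K K R) (star t)

theorem braidedStar_braidedStar (hQT : QuasiTri 𝕜 K R Ri) (hanti : star R = Ri)
    (hS₁ : ∀ k, antipode 𝕜 (Sinv k) = k) (hS₂ : ∀ k, Sinv (antipode 𝕜 k) = k)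
    (hact : MAlgAction 𝕜 K act) (hstar : ∀ k x, star (act k x) = act (Sinv (star k)) (star x))
    (t : L ⊗[𝕜] L) : braidedStar act R (braidedStar act R t) = t := by
  rw [braidedStar, braidedStar, star_actPair hstar, star_star, hQT.map_star_comm hanti hS₁ hS₂,
    ← actPair_mul_apply hact.act_act, hQT.comm_mul_comm_inv, actPair_one hact.act_one, id_apply]

theorem braidedStar_diagAct (hQT : QuasiTri 𝕜 K R Ri)
    (hS₁ : ∀ k, antipode 𝕜 (Sinv k) = k) (hS₂ : ∀ k, Sinv (antipode 𝕜 k) = k)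
    (hact : MAlgAction 𝕜 K act) (hstar : ∀ k x, star (act k x) = act (Sinv (star k)) (star x))
    (hcomul : ∀ k : K, comul (star k) = star (comul (R := 𝕜) k)) (k : K) (t : L ⊗[𝕜] L) :
    braidedStar act R (diagAct 𝕜 K act k t) =
      diagAct 𝕜 K act (Sinv (star k)) (braidedStar act R t) := by
  rw [braidedStar, braidedStar, diagAct_apply, diagAct_apply, star_actPair hstar, ← hcomul,
    map_comul_of_antipode_inverse hS₁ hS₂, ← actPair_mul_apply hact.act_act,
    hQT.comm_mul_comm_comul, actPair_mul_apply hact.act_act]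

theorem braidedStar_botMul_tmul (hQT : QuasiTri 𝕜 K R Ri) (hanti : star R = Ri)
    (hS₁ : ∀ k, antipode 𝕜 (Sinv k) = k) (hS₂ : ∀ k, Sinv (antipode 𝕜 k) = k)
    (hact : MAlgAction 𝕜 K act) (hstar : ∀ k x, star (act k x) = act (Sinv (star k)) (star x))
    (x y x' y' : L) :
    braidedStar act R (botMul 𝕜 K act R (x ⊗ₜ y) (x' ⊗ₜ y')) =
      botMul 𝕜 K act R (braidedStar act R (x' ⊗ₜ y')) (braidedStar act R (x ⊗ₜ y)) := by
  set T := TensorProduct.comm 𝕜 K K R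
  have hA := actPair_mul_apply (actPair_mul hact.act_act)
  calc braidedStar act R (botMul 𝕜 K act R (x ⊗ₜ y) (x' ⊗ₜ y'))
      = map (mul' 𝕜 L) (mul' 𝕜 L)
          (act₄ (leg23 T * (leg13 T * leg24 T)) ((star x' ⊗ₜ star x) ⊗ₜ (star y' ⊗ₜ star y))) := by
        rw [braidedStar, botMul_apply hact.act_one, tensorTensorTensorComm_tmul,
          star_map_mul'_actPair_leg23 hact.act_one hstar, hQT.map_star_comm hanti hS₁ hS₂,
          ← LinearMap.comp_apply, hact.actPair_comp_map_mul', LinearMap.comp_apply, ← hA,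
          hQT.map_comul_comul_comm_mul_leg14]
    _ = botMul 𝕜 K act R (braidedStar act R (x' ⊗ₜ y')) (braidedStar act R (x ⊗ₜ y)) := by
        rw [braidedStar, braidedStar, botMul_apply hact.act_one, ← TensorProduct.map_tmul,
          ← actPair_tmul, tensorTensorTensorComm_actPair,
          tensorTensorTensorComm_tmul_eq_leg13_mul_leg24, ← hA, star_tmul, star_tmul,
          tensorTensorTensorComm_tmul]

theorem braidedStar_botMul (hQT : QuasiTri 𝕜 K R Ri) (hanti : star R = Ri)
    (hS₁ : ∀ k, antipode 𝕜 (Sinv k) = k) (hS₂ : ∀ k, Sinv (antipode 𝕜 k) = k)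
    (hact : MAlgAction 𝕜 K act) (hstar : ∀ k x, star (act k x) = act (Sinv (star k)) (star x))
    (s t : L ⊗[𝕜] L) :
    braidedStar act R (botMul 𝕜 K act R s t) =
      botMul 𝕜 K act R (braidedStar act R t) (braidedStar act R s) := by
  induction s using TensorProduct.induction_on with
  | zero => simp [braidedStar]
  | add s₁ s₂ h₁ h₂ =>
    simp only [braidedStar, map_add, LinearMap.add_apply, star_add] at h₁ h₂ ⊢
    rw [h₁, h₂]
  | tmul x y =>
    induction t using TensorProduct.induction_on with
    | zero => simp [braidedStar]
    | add t₁ t₂ h₁ h₂ =>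
      simp only [braidedStar, map_add, LinearMap.add_apply, star_add] at h₁ h₂ ⊢
      rw [h₁, h₂]
    | tmul x' y' => exact braidedStar_botMul_tmul hQT hanti hS₁ hS₂ hact hstar x y x' y'

end Star

section Statement

variable (H : Type*) [Ring H] [HopfAlgebra ℂ H] [StarRing H] [StarModule ℂ H]

theorem braided_tensor_star_algebra
    (starT : H ⊗[ℂ] H → H ⊗[ℂ] H) (hstarT : IsStarT H starT)
    (hcomulstar : ∀ k : H,
      (Coalgebra.comul (R := ℂ) (star k) : H ⊗[ℂ] H)
        = starT (Coalgebra.comul k))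
    (R Ri : H ⊗[ℂ] H) (hQT : QuasiTri ℂ H R Ri)
    (hanti : starT R = Ri)
    -- inverse of the antipode
    (Sinv : H →ₗ[ℂ] H)
    (hS₁ : ∀ k : H, HopfAlgebra.antipode (R := ℂ) (Sinv k) = k)
    (hS₂ : ∀ k : H, Sinv (HopfAlgebra.antipode (R := ℂ) k) = k)
    -- `L` is an `H`-module *-algebra
    {L : Type*} [Ring L] [Algebra ℂ L] [StarRing L] [StarModule ℂ L]
    (act : H →ₗ[ℂ] L →ₗ[ℂ] L) (hact : MAlgAction ℂ H act)
    (hstaract : ∀ (k : H) (x : L),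
      star (act k x) = act (Sinv (star k)) (star x))
    -- the *-structure on `L ⊥ L`
    (starLL : L ⊗[ℂ] L → L ⊗[ℂ] L)
    (hLL_add : ∀ s t : L ⊗[ℂ] L, starLL (s + t) = starLL s + starLL t)
    (hLL_tmul : ∀ x y : L,
      starLL (x ⊗ₜ[ℂ] y)
        = actPair ℂ H act ((TensorProduct.comm ℂ H H) R)
            (star x ⊗ₜ[ℂ] star y)) :
    (∀ t : L ⊗[ℂ] L, starLL (starLL t) = t)
    ∧ (∀ s t : L ⊗[ℂ] L,
      starLL (botMul ℂ H act R s t)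
        = botMul ℂ H act R (starLL t) (starLL s))
    ∧ (∀ (k : H) (t : L ⊗[ℂ] L),
      starLL (diagAct ℂ H act k t)
        = diagAct ℂ H act (Sinv (star k)) (starLL t)) := by
  obtain rfl : starT = star := TensorProduct.eq_of_map_add_of_map_tmul hstarT.map_add star_add
    fun x y => by rw [hstarT.map_tmul, TensorProduct.star_tmul]
  obtain rfl : starLL = braidedStar act R := TensorProduct.eq_of_map_add_of_map_tmul hLL_add
    (fun s t => by simp only [braidedStar, star_add, map_add]) hLL_tmul
  exact ⟨braidedStar_braidedStar hQT hanti hS₁ hS₂ hact hstaract,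
    braidedStar_botMul hQT hanti hS₁ hS₂ hact hstaract,
    braidedStar_diagAct hQT hS₁ hS₂ hact hstaract hcomulstar⟩

end Statement
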